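/- Let a ∈ L¹(T) be even and let b ∈ L¹[−1,1] be given by b(cos θ) = a(e^{iθ}) √((1 + cos θ)/(1 − cos θ)) for 0 < θ < π (assume this defines an integrable function on [−1,1]). Then for every n ≥ 1: det( (a_{j−k} + a_{j+k+1})_{j,k=0}^{n−1} ) = det H_n[b]. -/

import Mathlib

/-! Let `V_j` be the Chebyshev polynomials of the third kind in the variable `2x`, so that
`V_j(2 cos θ) cos (θ/2) = cos ((j + 1/2) θ)`. Then
`cos ((j - k) θ) + cos ((j + k + 1) θ) = (1 + cos θ) V_j(2 cos θ) V_k(2 cos θ)`, so for even `a`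
the matrix `T_n(a) + H_n(a)` is the Gram matrix `(φ (V_j V_k))` of the functional
`φ p = (1/2π) ∫₀^{2π} a(θ) (1 + cos θ) p(2 cos θ) dθ`. As `V_j` is monic of degree `j`, this
Gram matrix is `L (φ (X^(j+k))) Lᵀ` with `L` unitriangular. Finally the substitution
`x = cos θ` turns `φ (X^m)` into the moment `b_{m+1}`, because
`sin θ √((1 + cos θ)/(1 - cos θ)) = 1 + cos θ`. -/

open Filter MeasureTheory

noncomputable section

/-- The `k`-th Fourier coefficient of a function on the unit circle, given as a
`2π`-periodic function of the angle: `a_k = (1/(2π)) ∫_0^{2π} f(θ) e^{-ikθ} dθ`. -/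
def fc (f : ℝ → ℂ) (k : ℤ) : ℂ :=
  ((1 / (2 * Real.pi) : ℝ) : ℂ) *
    ∫ θ in (0:ℝ)..(2 * Real.pi), f θ * Complex.exp (-(Complex.I * k * θ))

/-- The `m`-th moment `b_m = (1/π) ∫_{-1}^1 b(x) (2x)^{m-1} dx` of `b ∈ L¹[-1,1]`,
here recorded via the exponent `m - 1`, i.e. `bmom b e = (1/π) ∫_{-1}^1 b(x)(2x)^e dx`. -/
def bmom (b : ℝ → ℂ) (e : ℕ) : ℂ :=
  ((1 / Real.pi : ℝ) : ℂ) * ∫ x in (-1:ℝ)..1, b x * (2 * (x : ℂ)) ^ e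

open Polynomial

theorem det_gram_eq_det_hankel {R : Type*} [CommRing R] (φ : R[X] →ₗ[R] R) (P : ℕ → R[X])
    (hdeg : ∀ j, (P j).natDegree ≤ j) (hlead : ∀ j, (P j).coeff j = 1) (n : ℕ) :
    (Matrix.of fun j k : Fin n => φ (P j * P k)).det =
      (Matrix.of fun j k : Fin n => φ (X ^ ((j : ℕ) + k))).det := by
  set L : Matrix (Fin n) (Fin n) R := Matrix.of fun j i => (P j).coeff i
  have hL : L.det = 1 := by
    rw [Matrix.det_of_isLowerTriangular L fun j i hji =>
      coeff_eq_zero_of_natDegree_lt ((hdeg j).trans_lt hji)]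
    simp [L, hlead]
  have hP : ∀ j : Fin n, P j = ∑ i : Fin n, (P j).coeff i • X ^ (i : ℕ) := fun j => by
    rw [Fin.sum_univ_eq_sum_range (fun i => (P j).coeff i • X ^ i)]
    simp only [smul_X_eq_monomial]
    exact as_sum_range' _ _ ((hdeg j).trans_lt j.isLt)
  have hfac : (Matrix.of fun j k : Fin n => φ (P j * P k)) =
      L * (Matrix.of fun j k : Fin n => φ (X ^ ((j : ℕ) + k))) * L.transpose := by
    ext j k
    rw [Matrix.of_apply, hP j, hP k]
    simp only [Finset.sum_mul, Finset.mul_sum, smul_mul_smul, map_sum, map_smul,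
      smul_eq_mul, Matrix.mul_apply, Matrix.transpose_apply, Matrix.of_apply, L]
    exact Finset.sum_congr rfl fun i _ => Finset.sum_congr rfl fun l _ => by rw [pow_add]; ring
  rw [hfac, Matrix.det_mul, Matrix.det_mul, Matrix.det_transpose, hL, one_mul, mul_one]

/-- Chebyshev polynomials of the third kind, rescaled to the variable `2x` as
`Polynomial.Chebyshev.S` is. -/
def chebyshevV (R : Type*) [CommRing R] : ℕ → R[X]
  | 0 => 1
  | 1 => X - 1
  | j + 2 => X * chebyshevV R (j + 1) - chebyshevV R j

section chebyshevV

variable (R : Type*) [CommRing R]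

theorem natDegree_chebyshevV_le : ∀ j, (chebyshevV R j).natDegree ≤ j
  | 0 => by simp [chebyshevV]
  | 1 => by simp only [chebyshevV]; compute_degree!
  | j + 2 => by
    simp only [chebyshevV]
    refine (natDegree_sub_le _ _).trans (max_le ?_ ((natDegree_chebyshevV_le j).trans (by omega)))
    exact (natDegree_mul_le_of_le natDegree_X_le (natDegree_chebyshevV_le (j + 1))).trans (by omega)

theorem coeff_chebyshevV_self : ∀ j, (chebyshevV R j).coeff j = 1
  | 0 => by simp [chebyshevV]
  | 1 => by simp [chebyshevV, coeff_one]
  | j + 2 => by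
    rw [chebyshevV, coeff_sub, coeff_X_mul, coeff_chebyshevV_self (j + 1),
      coeff_eq_zero_of_natDegree_lt ((natDegree_chebyshevV_le R j).trans_lt (by omega)), sub_zero]

end chebyshevV

section ComplexCos

open Complex

theorem chebyshevV_eval_two_mul_complex_cos (θ : ℂ) :
    ∀ j : ℕ, (chebyshevV ℂ j).eval (2 * cos θ) * cos (θ / 2) = cos ((j + 1 / 2) * θ)
  | 0 => by simp [chebyshevV]; ring_nf
  | 1 => by
    have h := cos_add_cos ((1 + 1 / 2) * θ) (θ / 2)
    rw [show ((1 + 1 / 2) * θ + θ / 2) / 2 = θ by ring,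
      show ((1 + 1 / 2) * θ - θ / 2) / 2 = θ / 2 by ring] at h
    simp only [chebyshevV, eval_sub, eval_X, eval_one]
    push_cast
    linear_combination -h
  | j + 2 => by
    have h := cos_add_cos ((j + 2 + 1 / 2) * θ) ((j + 1 / 2) * θ)
    rw [show ((j + 2 + 1 / 2) * θ + (j + 1 / 2) * θ) / 2 = (j + 1 + 1 / 2) * θ by ring,
      show ((j + 2 + 1 / 2) * θ - (j + 1 / 2) * θ) / 2 = θ by ring] at h
    have ih₁ := chebyshevV_eval_two_mul_complex_cos θ (j + 1)
    have ih₀ := chebyshevV_eval_two_mul_complex_cos θ j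
    simp only [chebyshevV, eval_sub, eval_mul, eval_X]
    push_cast at ih₁ ⊢
    linear_combination 2 * cos θ * ih₁ - ih₀ - h

theorem one_add_cos_mul_eval_chebyshevV_mul (θ : ℂ) (j k : ℕ) :
    (1 + cos θ) * (chebyshevV ℂ j * chebyshevV ℂ k).eval (2 * cos θ) =
      cos ((j - k) * θ) + cos ((j + k + 1) * θ) := by
  have h := cos_add_cos ((j + k + 1) * θ) ((j - k) * θ)
  rw [show ((j + k + 1) * θ + (j - k) * θ) / 2 = (j + 1 / 2) * θ by ring,
    show ((j + k + 1) * θ - (j - k) * θ) / 2 = (k + 1 / 2) * θ by ring,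
    ← chebyshevV_eval_two_mul_complex_cos θ j, ← chebyshevV_eval_two_mul_complex_cos θ k] at h
  have hhalf : cos (θ / 2) ^ 2 = 1 / 2 + cos θ / 2 := by
    rw [cos_sq, show 2 * (θ / 2) = θ by ring]
  rw [eval_mul]
  linear_combination
    -h - 2 * (chebyshevV ℂ j).eval (2 * cos θ) * (chebyshevV ℂ k).eval (2 * cos θ) * hhalf

end ComplexCos

open Real

theorem intervalIntegral.integral_zero_two_mul_eq_two_smul_of_symm {E : Type*}
    [NormedAddCommGroup E] [NormedSpace ℝ E] {g : ℝ → E} {c : ℝ}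
    (hg : IntervalIntegrable g volume 0 (2 * c)) (hsymm : ∀ x, g (2 * c - x) = g x) :
    ∫ x in 0..2 * c, g x = (2 : ℕ) • ∫ x in 0..c, g x := by
  have hc : c ∈ Set.uIcc 0 (2 * c) := by
    rcases le_total 0 c with h | h
    exacts [Set.mem_uIcc.2 (Or.inl ⟨h, by linarith⟩),
      Set.mem_uIcc.2 (Or.inr ⟨by linarith, h⟩)]
  have hreflect : ∫ x in c..2 * c, g x = ∫ x in 0..c, g x := by
    have h := intervalIntegral.integral_comp_sub_left g (2 * c) (a := 0) (b := c)
    rw [sub_zero, show 2 * c - c = c by ring] at h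
    simpa only [hsymm] using h.symm
  rw [← intervalIntegral.integral_add_adjacent_intervals
    (hg.mono_set (Set.uIcc_subset_uIcc_left hc)) (hg.mono_set (Set.uIcc_subset_uIcc_right hc)),
    hreflect, two_nsmul]

theorem integral_neg_one_one_eq_integral_sin_smul_comp_cos {E : Type*} [NormedAddCommGroup E]
    [NormedSpace ℝ E] (f : ℝ → E) :
    ∫ x in (-1)..1, f x = ∫ θ in Set.Ioo 0 π, sin θ • f (cos θ) := by
  have himage : cos '' Set.Ioo 0 π = Set.Ioo (-1) 1 :=
    cosPartialHomeomorph.image_source_eq_target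
  rw [intervalIntegral.integral_of_le (by norm_num), integral_Ioc_eq_integral_Ioo, ← himage,
    integral_image_eq_integral_abs_deriv_smul measurableSet_Ioo
      (fun θ _ => (hasDerivAt_cos θ).hasDerivWithinAt) (injOn_cos.mono Set.Ioo_subset_Icc_self)]
  refine setIntegral_congr_fun measurableSet_Ioo fun θ hθ => ?_
  rw [abs_neg, abs_of_pos (sin_pos_of_pos_of_lt_pi hθ.1 hθ.2)]

theorem Real.sin_mul_sqrt_one_add_cos_div_one_sub_cos {θ : ℝ} (h₀ : 0 < θ) (hπ : θ < π) :
    sin θ * √((1 + cos θ) / (1 - cos θ)) = 1 + cos θ := by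
  have hsin := sin_pos_of_pos_of_lt_pi h₀ hπ
  have hcos : cos θ < 1 := by nlinarith [sin_sq_add_cos_sq θ, neg_one_le_cos θ]
  have hsq : (1 + cos θ) / (1 - cos θ) = ((1 + cos θ) / sin θ) ^ 2 := by
    have h₁ : 1 - cos θ ≠ 0 := by linarith
    have h₂ : 1 - cos θ ^ 2 ≠ 0 := by rw [← sin_sq]; positivity
    rw [div_pow, sin_sq]
    field_simp
    ring
  rw [hsq, sqrt_sq (div_nonneg (by linarith [neg_one_le_cos θ]) hsin.le)]
  field_simp

theorem fc_eq_integral_mul_cos {a : ℝ → ℂ} (ha : IntervalIntegrable a volume 0 (2 * π))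
    (hsymm : ∀ θ, a (2 * π - θ) = a θ) (m : ℤ) :
    fc a m = ((1 / (2 * π) : ℝ) : ℂ) * ∫ θ in 0..2 * π, a θ * Complex.cos (m * θ) := by
  have hreflect : ∫ θ in 0..2 * π, a θ * Complex.exp (-(Complex.I * m * θ)) =
      ∫ θ in 0..2 * π, a θ * Complex.exp (Complex.I * m * θ) := by
    have h := intervalIntegral.integral_comp_sub_left
      (fun θ : ℝ => a θ * Complex.exp (-(Complex.I * m * θ))) (2 * π) (a := 0) (b := 2 * π)
    rw [sub_zero, sub_self] at h
    rw [← h]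
    refine intervalIntegral.integral_congr fun θ _ => ?_
    rw [hsymm, show -(Complex.I * m * ((2 * π - θ : ℝ) : ℂ)) =
      Complex.I * m * θ + (-m : ℤ) * (2 * π * Complex.I) by push_cast; ring,
      Complex.exp_add, Complex.exp_int_mul_two_pi_mul_I, mul_one]
  have htwo : 2 * ∫ θ in 0..2 * π, a θ * Complex.cos (m * θ) =
      (∫ θ in 0..2 * π, a θ * Complex.exp (Complex.I * m * θ)) +
        ∫ θ in 0..2 * π, a θ * Complex.exp (-(Complex.I * m * θ)) := by
    rw [← intervalIntegral.integral_const_mul, ← intervalIntegral.integral_add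
      (ha.mul_continuousOn (by fun_prop)) (ha.mul_continuousOn (by fun_prop))]
    refine intervalIntegral.integral_congr fun θ _ => ?_
    rw [mul_left_comm, Complex.two_cos]
    ring_nf
  rw [fc]
  linear_combination (((1 / (2 * π) : ℝ) : ℂ) / 2) * (hreflect - htwo)

def cosMomentFunctional (a : ℝ → ℂ) (ha : IntervalIntegrable a volume 0 (2 * π)) :
    ℂ[X] →ₗ[ℂ] ℂ where
  toFun p := ((1 / (2 * π) : ℝ) : ℂ) *
    ∫ θ in 0..2 * π, a θ * ((1 + Complex.cos θ) * p.eval (2 * Complex.cos θ))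
  map_add' p q := by
    rw [← mul_add, ← intervalIntegral.integral_add (ha.mul_continuousOn (by fun_prop))
      (ha.mul_continuousOn (by fun_prop))]
    simp only [eval_add, mul_add]
  map_smul' c p := by
    rw [RingHom.id_apply, smul_eq_mul, mul_left_comm c, ← intervalIntegral.integral_const_mul c]
    simp only [eval_smul, smul_eq_mul]
    congr 1
    exact intervalIntegral.integral_congr fun θ _ => by ring

section cosMomentFunctional

variable {a : ℝ → ℂ} (ha : IntervalIntegrable a volume 0 (2 * π))
  (hsymm : ∀ θ, a (2 * π - θ) = a θ)
include ha hsymm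

theorem cosMomentFunctional_chebyshevV_mul (j k : ℕ) :
    cosMomentFunctional a ha (chebyshevV ℂ j * chebyshevV ℂ k) =
      fc a ((j : ℤ) - k) + fc a ((j : ℤ) + k + 1) := by
  rw [fc_eq_integral_mul_cos ha hsymm, fc_eq_integral_mul_cos ha hsymm, ← mul_add,
    ← intervalIntegral.integral_add (ha.mul_continuousOn (by fun_prop))
      (ha.mul_continuousOn (by fun_prop))]
  simp only [cosMomentFunctional, LinearMap.coe_mk, AddHom.coe_mk,
    one_add_cos_mul_eval_chebyshevV_mul, mul_add]
  push_cast
  ring_nf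

theorem cosMomentFunctional_X_pow {b : ℝ → ℂ}
    (hb : ∀ θ : ℝ, 0 < θ → θ < π →
      b (cos θ) = a θ * ((√((1 + cos θ) / (1 - cos θ)) : ℝ) : ℂ)) (m : ℕ) :
    cosMomentFunctional a ha (X ^ m) = bmom b m := by
  set g : ℝ → ℂ := fun θ => a θ * ((1 + Complex.cos θ) * (2 * Complex.cos θ) ^ m)
  have hg : IntervalIntegrable g volume 0 (2 * π) := ha.mul_continuousOn (by fun_prop)
  have hgsymm : ∀ θ, g (2 * π - θ) = g θ := fun θ => by
    simp only [g, hsymm, ← Complex.ofReal_cos, cos_two_pi_sub]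
  have hsubst : ∀ θ ∈ Set.Ioo 0 π, sin θ • (b (cos θ) * (2 * (cos θ : ℂ)) ^ m) = g θ :=
    fun θ ⟨h₀, hπ⟩ => by
      have hweight :
          (sin θ : ℂ) * (√((1 + cos θ) / (1 - cos θ)) : ℝ) = 1 + Complex.cos θ := by
        exact_mod_cast sin_mul_sqrt_one_add_cos_div_one_sub_cos h₀ hπ
      rw [Complex.real_smul, hb θ h₀ hπ, Complex.ofReal_cos]
      linear_combination a θ * (2 * Complex.cos θ) ^ m * hweight
  have hhalf : ∫ θ in 0..2 * π, g θ = 2 * ∫ θ in Set.Ioo 0 π, g θ := by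
    rw [intervalIntegral.integral_zero_two_mul_eq_two_smul_of_symm hg hgsymm,
      intervalIntegral.integral_of_le pi_pos.le, integral_Ioc_eq_integral_Ioo, two_nsmul,
      two_mul]
  simp only [cosMomentFunctional, LinearMap.coe_mk, AddHom.coe_mk, eval_pow, eval_X]
  rw [hhalf, bmom, integral_neg_one_one_eq_integral_sin_smul_comp_cos,
    setIntegral_congr_fun measurableSet_Ioo hsubst]
  push_cast
  field_simp

end cosMomentFunctional

theorem stmt6_general (a : ℝ → ℂ) (hper : Function.Periodic a (2 * Real.pi))
    (hint : IntegrableOn a (Set.Ioc 0 (2 * Real.pi)))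
    (heven : ∀ θ : ℝ, a (-θ) = a θ)
    (b : ℝ → ℂ)
    (hb : ∀ θ : ℝ, 0 < θ → θ < Real.pi →
      b (Real.cos θ) =
        a θ * ((Real.sqrt ((1 + Real.cos θ) / (1 - Real.cos θ)) : ℝ) : ℂ)) :
    ∀ n : ℕ, 1 ≤ n →
      (Matrix.of fun j k : Fin n =>
          fc a ((j : ℤ) - k) + fc a ((j : ℤ) + k + 1)).det
        = (Matrix.of fun j k : Fin n => bmom b ((j : ℕ) + k)).det := by
  intro n _
  have ha : IntervalIntegrable a volume 0 (2 * π) :=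
    (intervalIntegrable_iff_integrableOn_Ioc_of_le two_pi_pos.le).2 hint
  have hsymm : ∀ θ, a (2 * π - θ) = a θ := fun θ => by rw [sub_eq_neg_add, hper, heven]
  have h := det_gram_eq_det_hankel (cosMomentFunctional a ha) (chebyshevV ℂ)
    (natDegree_chebyshevV_le ℂ) (coeff_chebyshevV_self ℂ) n
  simpa only [cosMomentFunctional_chebyshevV_mul ha hsymm,
    cosMomentFunctional_X_pow ha hsymm hb] using h

/-- Let `a ∈ L¹(T)` be even and `b ∈ L¹[−1,1]` be given by
`b(cos θ) = a(e^{iθ}) √((1 + cos θ)/(1 − cos θ))` for `0 < θ < π`.  Then for every `n ≥ 1`,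
`det(T_n(a) + H_n(a)) = det H_n[b]`. -/
theorem stmt6 (a : ℝ → ℂ) (hper : Function.Periodic a (2 * Real.pi))
    (hint : IntegrableOn a (Set.Ioc 0 (2 * Real.pi)))
    (heven : ∀ θ : ℝ, a (-θ) = a θ)
    (b : ℝ → ℂ) (hbint : IntegrableOn b (Set.Icc (-1 : ℝ) 1))
    (hb : ∀ θ : ℝ, 0 < θ → θ < Real.pi →
      b (Real.cos θ) =
        a θ * ((Real.sqrt ((1 + Real.cos θ) / (1 - Real.cos θ)) : ℝ) : ℂ)) :
    ∀ n : ℕ, 1 ≤ n →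
      (Matrix.of fun j k : Fin n =>
          fc a ((j : ℤ) - k) + fc a ((j : ℤ) + k + 1)).det
        = (Matrix.of fun j k : Fin n => bmom b ((j : ℕ) + k)).det :=
  stmt6_general a hper hint heven b hb
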